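/- Let p > 0, δ > 0, and t = 1/(p+1). The set A = {|n|^{−p/(p+1)} n : n ∈ Z^d, n ≠ 0} ∪ {0} ⊆ R^d is (p, δ)-separated for all sufficiently small δ > 0, i.e., the balls B(a, δ⟨a⟩^{−p}) for a ∈ A are pairwise disjoint. -/

import Mathlib

open Metric

noncomputable def jb {d : ℕ} (x : EuclideanSpace ℝ (Fin d)) : ℝ := Real.sqrt (1 + ‖x‖ ^ 2)

noncomputable def intVec (d : ℕ) (n : Fin d → ℤ) : EuclideanSpace ℝ (Fin d) :=
  WithLp.toLp 2 (fun i => (n i : ℝ) : Fin d → ℝ)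

/-- The set `A = {|n|^{-p/(p+1)} n : 0 ≠ n ∈ ℤ^d} ∪ {0}`. -/
noncomputable def sqrtLattice (d : ℕ) (p : ℝ) : Set (EuclideanSpace ℝ (Fin d)) :=
  {0} ∪ ((fun n : Fin d → ℤ => ‖intVec d n‖ ^ (-(p / (p + 1))) • intVec d n) '' {n | n ≠ 0})

/-!
Write `φ x = ‖x‖ ^ p • x`. The map `x ↦ ‖x‖ ^ (-(p / (p + 1))) • x` is inverse to `φ`, so `φ`
maps the set onto `ℤ^d` and distinct points `a, b` of the set have `‖φ a - φ b‖ ≥ 1`. As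
`‖φ a - φ b‖ ≤ (1 + max 1 p) * max ‖a‖ ‖b‖ ^ p * ‖a - b‖`, for `⟨a⟩ ≤ ⟨b⟩` this gives
`‖a - b‖ ≳ ⟨b⟩ ^ (-p)`, which dominates both radii when `⟨b⟩ ≤ 2 ⟨a⟩`. Otherwise
`‖a - b‖ ≥ ⟨b⟩ - ⟨a⟩ ≥ ⟨a⟩ ≥ 1`, while both radii are at most `δ ≤ 1 / 2`.
-/

lemma one_sub_rpow_le_max_mul {p t : ℝ} (ht₀ : 0 ≤ t) (ht₁ : t ≤ 1) :
    1 - t ^ p ≤ max 1 p * (1 - t) := by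
  rcases le_total p 1 with hp1 | hp1
  · have : t ≤ t ^ p := Real.self_le_rpow_of_le_one ht₀ ht₁ hp1
    nlinarith [le_max_left 1 p]
  · have bernoulli := one_add_mul_self_le_rpow_one_add (s := t - 1) (by linarith) hp1
    rw [add_sub_cancel] at bernoulli
    nlinarith [le_max_right 1 p]

lemma rpow_sub_rpow_mul_le {p a b : ℝ} (ha : 0 ≤ a) (hab : a ≤ b) :
    (b ^ p - a ^ p) * b ≤ max 1 p * b ^ p * (b - a) := by
  rcases (ha.trans hab).eq_or_lt with rfl | hb
  · simp [le_antisymm hab ha]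
  have key := one_sub_rpow_le_max_mul (p := p) (div_nonneg ha hb.le) ((div_le_one hb).2 hab)
  calc (b ^ p - a ^ p) * b = b ^ p * b * (1 - (a / b) ^ p) := by
        rw [Real.div_rpow ha hb.le]; field_simp
    _ ≤ b ^ p * b * (max 1 p * (1 - a / b)) := by gcongr
    _ = max 1 p * b ^ p * (b - a) := by field_simp

lemma norm_rpow_smul_sub_rpow_smul_le {E : Type*} [NormedAddCommGroup E] [NormedSpace ℝ E]
    {p : ℝ} (hp : 0 ≤ p) {u v : E} (h : ‖v‖ ≤ ‖u‖) :
    ‖‖u‖ ^ p • u - ‖v‖ ^ p • v‖ ≤ (1 + max 1 p) * ‖u‖ ^ p * ‖u - v‖ := by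
  have hpow : ‖v‖ ^ p ≤ ‖u‖ ^ p := by gcongr
  have hscalar : (‖u‖ ^ p - ‖v‖ ^ p) * ‖v‖ ≤ max 1 p * ‖u‖ ^ p * ‖u - v‖ :=
    calc (‖u‖ ^ p - ‖v‖ ^ p) * ‖v‖ ≤ (‖u‖ ^ p - ‖v‖ ^ p) * ‖u‖ := by gcongr
      _ ≤ max 1 p * ‖u‖ ^ p * (‖u‖ - ‖v‖) := rpow_sub_rpow_mul_le (norm_nonneg v) h
      _ ≤ max 1 p * ‖u‖ ^ p * ‖u - v‖ := by
        gcongr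
        exact norm_sub_norm_le u v
  calc ‖‖u‖ ^ p • u - ‖v‖ ^ p • v‖ = ‖‖u‖ ^ p • (u - v) + (‖u‖ ^ p - ‖v‖ ^ p) • v‖ := by
        rw [smul_sub, sub_smul, sub_add_sub_cancel]
    _ ≤ ‖u‖ ^ p * ‖u - v‖ + (‖u‖ ^ p - ‖v‖ ^ p) * ‖v‖ := by
        refine (norm_add_le _ _).trans_eq ?_
        rw [norm_smul, norm_smul, Real.norm_of_nonneg (by positivity),
          Real.norm_of_nonneg (by linarith)]
    _ ≤ (1 + max 1 p) * ‖u‖ ^ p * ‖u - v‖ := by linarith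

lemma norm_rpow_smul_norm_rpow_neg_smul {E : Type*} [NormedAddCommGroup E] [NormedSpace ℝ E]
    {p : ℝ} (hp : p + 1 ≠ 0) (x : E) :
    ‖‖x‖ ^ (-(p / (p + 1))) • x‖ ^ p • (‖x‖ ^ (-(p / (p + 1))) • x) = x := by
  rcases (norm_nonneg x).eq_or_lt with hx | hx
  · rw [norm_eq_zero.1 hx.symm, smul_zero, smul_zero]
  rw [norm_smul, Real.norm_of_nonneg (by positivity), ← Real.rpow_add_one hx.ne',
    ← Real.rpow_mul hx.le, smul_smul, ← Real.rpow_add hx]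
  convert one_smul ℝ x
  convert Real.rpow_zero ‖x‖ using 2
  field_simp
  ring

lemma norm_le_jb {d : ℕ} (x : EuclideanSpace ℝ (Fin d)) : ‖x‖ ≤ jb x :=
  Real.le_sqrt_of_sq_le (by linarith)

lemma one_le_jb {d : ℕ} (x : EuclideanSpace ℝ (Fin d)) : 1 ≤ jb x :=
  Real.le_sqrt_of_sq_le (by nlinarith [sq_nonneg ‖x‖])

lemma jb_le_jb {d : ℕ} {x y : EuclideanSpace ℝ (Fin d)} (h : ‖x‖ ≤ ‖y‖) : jb x ≤ jb y := by
  unfold jb; gcongr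

lemma jb_le_jb_add_dist {d : ℕ} (x y : EuclideanSpace ℝ (Fin d)) : jb y ≤ jb x + dist x y := by
  have hsq : jb x ^ 2 = 1 + ‖x‖ ^ 2 := Real.sq_sqrt (by positivity)
  have hy : ‖y‖ ≤ ‖x‖ + dist x y := by
    rw [dist_comm, dist_eq_norm]; exact norm_le_insert' y x
  have hjb : 0 ≤ jb x := zero_le_one.trans (one_le_jb x)
  refine Real.sqrt_le_iff.2 ⟨add_nonneg hjb dist_nonneg, ?_⟩
  nlinarith [mul_le_mul_of_nonneg_right (norm_le_jb x) (dist_nonneg (x := x) (y := y)),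
    norm_nonneg y]

lemma one_le_norm_intVec_sub {d : ℕ} {m n : Fin d → ℤ} (h : m ≠ n) :
    1 ≤ ‖intVec d m - intVec d n‖ := by
  obtain ⟨i, hi⟩ := Function.ne_iff.1 h
  calc (1 : ℝ) ≤ |((m i - n i : ℤ) : ℝ)| := by
        exact_mod_cast Int.one_le_abs (sub_ne_zero.2 hi)
    _ ≤ ‖intVec d m - intVec d n‖ := by
        simpa [intVec] using PiLp.norm_apply_le (intVec d m - intVec d n) i

lemma intVec_zero (d : ℕ) : intVec d 0 = 0 := by
  ext i; simp [intVec]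

lemma sqrtLattice_eq_range (d : ℕ) (p : ℝ) :
    sqrtLattice d p = Set.range fun n => ‖intVec d n‖ ^ (-(p / (p + 1))) • intVec d n := by
  ext a
  constructor
  · rintro (rfl | ⟨n, -, rfl⟩)
    · exact ⟨0, by simp only [intVec_zero, smul_zero]⟩
    · exact ⟨n, rfl⟩
  · rintro ⟨n, rfl⟩
    by_cases hn : n = 0
    · exact Or.inl (by simp only [hn, intVec_zero, smul_zero, Set.mem_singleton_iff])
    · exact Or.inr ⟨n, hn, rfl⟩

lemma mul_rpow_neg_add_mul_rpow_neg_le {p K δ A B D : ℝ} (hp : 0 ≤ p) (hK : 1 ≤ K) (hδ : 0 ≤ δ)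
    (hδK : δ ≤ (2 * 2 ^ p * K)⁻¹) (hA : 1 ≤ A) (hAB : A ≤ B) (hD : 1 ≤ K * B ^ p * D)
    (hgap : B - A ≤ D) : δ * A ^ (-p) + δ * B ^ (-p) ≤ D := by
  have h2p : 1 ≤ (2 : ℝ) ^ p := Real.one_le_rpow one_le_two hp
  have hc : 0 < 2 * 2 ^ p * K := by positivity
  have hδK' : 2 * 2 ^ p * K * δ ≤ 1 :=
    (mul_le_mul_of_nonneg_left hδK hc.le).trans_eq (mul_inv_cancel₀ hc.ne')
  have hA₀ : 0 < A := zero_lt_one.trans_le hA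
  have hB₀ : 0 < B := hA₀.trans_le hAB
  have hApos : 0 < A ^ p := by positivity
  have hBpos : 0 < B ^ p := by positivity
  rw [Real.rpow_neg hA₀.le, Real.rpow_neg hB₀.le, ← div_eq_mul_inv, ← div_eq_mul_inv]
  rcases le_total B (2 * A) with hcomp | hspread
  · have hBA : B ^ p ≤ 2 ^ p * A ^ p := by
      rw [← Real.mul_rpow zero_le_two (by positivity)]; gcongr
    have hAB' : A ^ p ≤ B ^ p := by gcongr
    have h1 : δ / A ^ p ≤ 2 ^ p * δ / B ^ p := by
      rw [div_le_div_iff₀ hApos hBpos]; nlinarith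
    have h2 : δ / B ^ p ≤ 2 ^ p * δ / B ^ p := by gcongr; nlinarith
    have h3 : 2 * (2 ^ p * δ) ≤ B ^ p * D := by nlinarith
    calc δ / A ^ p + δ / B ^ p ≤ 2 * (2 ^ p * δ) / B ^ p := by
          rw [mul_div_assoc, two_mul]; linarith
      _ ≤ D := by rw [div_le_iff₀ hBpos]; linarith
  · have h1 : δ / A ^ p ≤ δ := div_le_self hδ (Real.one_le_rpow hA hp)
    have h2 : δ / B ^ p ≤ δ := div_le_self hδ (Real.one_le_rpow (hA.trans hAB) hp)
    nlinarith

lemma mul_jb_rpow_neg_add_le_dist {d : ℕ} {p δ : ℝ} (hp : 0 ≤ p) (hδ : 0 ≤ δ)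
    (hδK : δ ≤ (2 * 2 ^ p * (1 + max 1 p))⁻¹) {a b : EuclideanSpace ℝ (Fin d)}
    (hab : 1 ≤ ‖‖a‖ ^ p • a - ‖b‖ ^ p • b‖) :
    δ * jb a ^ (-p) + δ * jb b ^ (-p) ≤ dist a b := by
  wlog h : ‖a‖ ≤ ‖b‖ generalizing a b
  · rw [add_comm, dist_comm]
    exact this (by rwa [norm_sub_rev]) (le_of_not_ge h)
  have hK : 1 ≤ 1 + max 1 p := by linarith [le_max_left 1 p]
  refine mul_rpow_neg_add_mul_rpow_neg_le hp hK hδ hδK (one_le_jb a) (jb_le_jb h) ?_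
    (by linarith [jb_le_jb_add_dist a b])
  calc 1 ≤ ‖‖b‖ ^ p • b - ‖a‖ ^ p • a‖ := by rwa [norm_sub_rev]
    _ ≤ (1 + max 1 p) * ‖b‖ ^ p * ‖b - a‖ := norm_rpow_smul_sub_rpow_smul_le hp h
    _ ≤ (1 + max 1 p) * jb b ^ p * dist a b := by
        rw [dist_comm, dist_eq_norm]; gcongr; exact norm_le_jb b

/-- `A = {|n|^{-p/(p+1)} n} ∪ {0}` is `(p,δ)`-separated for all sufficiently small `δ > 0`:
the balls `B(a, δ ⟨a⟩^{-p})`, `a ∈ A`, are pairwise disjoint. -/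
theorem sqrtLattice_separated (d : ℕ) (p : ℝ) (hp : 0 < p) :
    ∃ δ₀ > (0 : ℝ), ∀ δ : ℝ, 0 < δ → δ ≤ δ₀ →
      (sqrtLattice d p).Pairwise fun a b =>
        Disjoint (ball a (δ * jb a ^ (-p))) (ball b (δ * jb b ^ (-p))) := by
  refine ⟨(2 * 2 ^ p * (1 + max 1 p))⁻¹, by positivity, fun δ hδ hδ₀ => ?_⟩
  rw [sqrtLattice_eq_range]
  rintro _ ⟨m, rfl⟩ _ ⟨n, rfl⟩ hmn
  have hne : m ≠ n := by rintro rfl; exact hmn rfl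
  refine ball_disjoint_ball (mul_jb_rpow_neg_add_le_dist hp.le hδ.le hδ₀ ?_)
  have hp1 : p + 1 ≠ 0 := by positivity
  rw [norm_rpow_smul_norm_rpow_neg_smul hp1, norm_rpow_smul_norm_rpow_neg_smul hp1]
  exact one_le_norm_intVec_sub hne
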